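/- arXiv:2510.00539 — 2 statements merged into one kernel-verified Lean document; each statement's English description precedes it below -/
import Mathlib

section
/- Interpolation inequality: let 1 ≤ r ≤ 2 and set α = 2/r − 1. If ω ∈ L²(ℝ²₊) and x₂ ω ∈ L¹(ℝ²₊), then x₂^α ω ∈ L^r(ℝ²₊) and ‖x₂^α ω‖_{L^r} ≤ ‖x₂ ω‖_{L¹}^α · ‖ω‖_{L²}^{1−α}. -/
open MeasureTheory Real

/-- The open upper half-plane as a subset of `ℝ²`. -/
def upperHalfPlane2 : Set (EuclideanSpace ℝ (Fin 2)) := {x | 0 < x 1}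

open scoped ENNReal

/-- Interpolation inequality: for `1 ≤ r ≤ 2`, `α = 2/r - 1`, if `ω ∈ L²(ℝ²₊)` and
`x₂ ω ∈ L¹(ℝ²₊)`, then `x₂^α ω ∈ L^r(ℝ²₊)` with
`‖x₂^α ω‖_{L^r} ≤ ‖x₂ ω‖_{L¹}^α ‖ω‖_{L²}^{1-α}`. -/
theorem weighted_interpolation (r α : ℝ) (hr1 : 1 ≤ r) (hr2 : r ≤ 2)
    (hα : α = 2 / r - 1) (ω : EuclideanSpace ℝ (Fin 2) → ℝ)
    (hω2 : MemLp ω 2 (volume.restrict upperHalfPlane2))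
    (hω1 : Integrable (fun x => x 1 * ω x) (volume.restrict upperHalfPlane2)) :
    MemLp (fun x => (x 1) ^ α * ω x) (ENNReal.ofReal r) (volume.restrict upperHalfPlane2) ∧
      eLpNorm (fun x => (x 1) ^ α * ω x) (ENNReal.ofReal r) (volume.restrict upperHalfPlane2) ≤
        (eLpNorm (fun x => x 1 * ω x) 1 (volume.restrict upperHalfPlane2)) ^ α *
          (eLpNorm ω 2 (volume.restrict upperHalfPlane2)) ^ (1 - α) := by
  set μ := volume.restrict upperHalfPlane2 with hμ
  have hr0 : (0:ℝ) < r := lt_of_lt_of_le one_pos hr1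
  have hα0 : 0 ≤ α := by rw [hα, le_sub_iff_add_le, zero_add, le_div_iff₀ hr0]; linarith
  have hα1 : α ≤ 1 := by rw [hα, sub_le_iff_le_add, div_le_iff₀ hr0]; linarith
  rcases eq_or_lt_of_le hα0 with h0 | h0
  · -- α = 0, r = 2
    have h2r : 2 / r = 1 := by rw [← h0] at hα; linarith
    have hr : r = 2 := by field_simp at h2r; linarith
    have hfun : (fun x : EuclideanSpace ℝ (Fin 2) => (x 1) ^ α * ω x) = ω := by
      funext x; rw [← h0, Real.rpow_zero, one_mul]
    have h2 : ENNReal.ofReal r = 2 := by rw [hr]; norm_num [ENNReal.ofReal_ofNat]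
    rw [hfun, h2, ← h0]
    exact ⟨hω2, by simp⟩
  rcases eq_or_lt_of_le hα1 with h1 | h1
  · -- α = 1, r = 1
    have hr : r = 1 := by rw [h1] at hα; field_simp at hα; linarith
    have hfun : (fun x : EuclideanSpace ℝ (Fin 2) => (x 1) ^ α * ω x)
        = fun x => x 1 * ω x := by
      funext x; rw [h1, Real.rpow_one]
    have h2 : ENNReal.ofReal r = 1 := by rw [hr]; simp
    rw [hfun, h2, h1]
    exact ⟨memLp_one_iff_integrable.mpr hω1, by simp⟩
  -- main case 0 < α < 1
  have h1α : (0:ℝ) < 1 - α := by linarith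
  set f : EuclideanSpace ℝ (Fin 2) → ℝ := fun x => ‖x 1 * ω x‖ ^ α with hf
  set g : EuclideanSpace ℝ (Fin 2) → ℝ := fun x => ‖ω x‖ ^ (1 - α) with hg
  have hfm : AEStronglyMeasurable f μ := by
    have := hω1.1.norm.aemeasurable
    exact (by fun_prop : AEMeasurable f μ).aestronglyMeasurable
  have hgm : AEStronglyMeasurable g μ := by
    have := hω2.1.norm.aemeasurable
    exact (by fun_prop : AEMeasurable g μ).aestronglyMeasurable
  have hcoord : Measurable fun x : EuclideanSpace ℝ (Fin 2) => x 1 :=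
    (EuclideanSpace.proj (1 : Fin 2)).continuous.measurable
  have hmeas : MeasurableSet upperHalfPlane2 :=
    measurableSet_lt measurable_const hcoord
  have hpos : ∀ᵐ x ∂μ, x ∈ upperHalfPlane2 := ae_restrict_mem hmeas
  have hae : ∀ᵐ x ∂μ, ‖(x 1) ^ α * ω x‖ = ‖f x * g x‖ := by
    filter_upwards [hpos] with x hx
    have hx : (0:ℝ) < x 1 := hx
    have habs : |x 1 * ω x| = x 1 * |ω x| := by rw [abs_mul, abs_of_pos hx]
    have hw : |ω x| ^ α * |ω x| ^ (1 - α) = |ω x| := by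
      rw [← Real.rpow_add_of_nonneg (abs_nonneg _) hα0 h1α.le]
      simp
    rw [Real.norm_eq_abs, abs_mul, abs_of_pos (Real.rpow_pos_of_pos hx α),
      Real.norm_eq_abs (f x * g x),
      abs_of_nonneg (mul_nonneg (Real.rpow_nonneg (norm_nonneg _) _)
        (Real.rpow_nonneg (norm_nonneg _) _))]
    show x 1 ^ α * |ω x| = ‖x 1 * ω x‖ ^ α * ‖ω x‖ ^ (1 - α)
    simp only [Real.norm_eq_abs, habs]
    rw [Real.mul_rpow hx.le (abs_nonneg _), mul_assoc, hw]
  set q1 : ℝ≥0∞ := ENNReal.ofReal α⁻¹ with hq1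
  set q2 : ℝ≥0∞ := ENNReal.ofReal (2 / (1 - α)) with hq2
  have hexp : 1 / ENNReal.ofReal r = 1 / q1 + 1 / q2 := by
    rw [hq1, hq2, one_div, one_div, one_div, ← ENNReal.ofReal_inv_of_pos hr0,
      ← ENNReal.ofReal_inv_of_pos (by positivity),
      ← ENNReal.ofReal_inv_of_pos (by positivity), inv_inv, inv_div,
      ← ENNReal.ofReal_add h0.le (by positivity)]
    congr 1
    rw [hα]
    field_simp
    ring
  have hholder := eLpNorm_le_eLpNorm_mul_eLpNorm'_of_norm (μ := μ) hfm hgm (· * ·) 1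
    (Filter.Eventually.of_forall fun x => by rw [norm_mul]; simp)
    (hpqr := ⟨by simpa [one_div] using hexp.symm⟩)
  simp only [ENNReal.coe_one, one_mul] at hholder
  have hfnorm : eLpNorm f q1 μ = eLpNorm (fun x => x 1 * ω x) 1 μ ^ α := by
    rw [hf, eLpNorm_norm_rpow _ h0, hq1, ← ENNReal.ofReal_mul (by positivity),
      inv_mul_cancel₀ (ne_of_gt h0), ENNReal.ofReal_one]
  have hgnorm : eLpNorm g q2 μ = eLpNorm ω 2 μ ^ (1 - α) := by
    rw [hg, eLpNorm_norm_rpow _ h1α, hq2, ← ENNReal.ofReal_mul (by positivity),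
      div_mul_cancel₀ _ (ne_of_gt h1α)]
    norm_num [ENNReal.ofReal_ofNat]
  have hkey : eLpNorm (fun x => (x 1) ^ α * ω x) (ENNReal.ofReal r) μ ≤
      eLpNorm (fun x => x 1 * ω x) 1 μ ^ α * eLpNorm ω 2 μ ^ (1 - α) := by
    rw [eLpNorm_congr_norm_ae hae, ← hfnorm, ← hgnorm]
    exact hholder
  have htm : AEStronglyMeasurable (fun x => (x 1) ^ α * ω x) μ := by
    have hc : Measurable fun x : EuclideanSpace ℝ (Fin 2) => (x 1) ^ α :=
      (by fun_prop : Measurable fun y : ℝ => y ^ α).comp hcoord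
    exact (hc.aemeasurable.mul hω2.1.aemeasurable).aestronglyMeasurable
  refine ⟨⟨htm, lt_of_le_of_lt hkey ?_⟩, hkey⟩
  exact ENNReal.mul_lt_top
    (ENNReal.rpow_lt_top_of_nonneg hα0 (memLp_one_iff_integrable.mpr hω1).2.ne)
    (ENNReal.rpow_lt_top_of_nonneg (by linarith) hω2.2.ne)
end

section
/- Negativity of the minimum: with I₁ as above, inf over ω ≥ 0 with ∫_{ℝ²₊} x₂ω dx = 1 of I₁[ω] is strictly negative; more precisely, for any fixed admissible ω₁ with ‖∇ψ₁‖_{L²} > 0, the scaled functions ω_σ(x) = σ³ ω₁(σx) are admissible and satisfy I₁[ω_σ] = (σ⁴/2)‖ω₁‖_{L²}² − (σ²/2)‖∇ψ₁‖_{L²}² < 0 for small σ > 0. -/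
open MeasureTheory Real

/-- The Dirichlet Green function of the upper half-plane. -/
noncomputable def greenHalfPlane (x y : EuclideanSpace ℝ (Fin 2)) : ℝ :=
  (1 / (4 * π)) * Real.log (1 + 4 * x 1 * y 1 / dist x y ^ 2)

open Pointwise in
lemma smul_UHP {σ : ℝ} (hσ : 0 < σ) : σ • upperHalfPlane2 = upperHalfPlane2 := by
  ext y
  rw [Set.mem_smul_set_iff_inv_smul_mem₀ hσ.ne']
  simp only [upperHalfPlane2, Set.mem_setOf_eq, PiLp.smul_apply, smul_eq_mul]
  constructor
  · intro h
    have h2 : (0:ℝ) < σ * (σ⁻¹ * y 1) := mul_pos hσ h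
    rwa [← mul_assoc, mul_inv_cancel₀ hσ.ne', one_mul] at h2
  · intro h; exact mul_pos (inv_pos.2 hσ) h

lemma scale_int (f : EuclideanSpace ℝ (Fin 2) → ℝ) {σ : ℝ} (hσ : 0 < σ) :
    ∫ x in upperHalfPlane2, f (σ • x) = (σ ^ 2)⁻¹ * ∫ x in upperHalfPlane2, f x := by
  rw [Measure.setIntegral_comp_smul_of_pos volume f upperHalfPlane2 hσ, smul_UHP hσ,
    finrank_euclideanSpace_fin, smul_eq_mul]

lemma green_smul {σ : ℝ} (hσ : 0 < σ) (x y : EuclideanSpace ℝ (Fin 2)) :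
    greenHalfPlane (σ • x) (σ • y) = greenHalfPlane x y := by
  have hσ2 : σ ^ 2 ≠ 0 := pow_ne_zero _ hσ.ne'
  unfold greenHalfPlane
  congr 2
  rw [dist_smul₀, Real.norm_eq_abs, abs_of_pos hσ]
  simp only [PiLp.smul_apply, smul_eq_mul, mul_pow]
  rw [show 4 * (σ * x 1) * (σ * y 1) = σ ^ 2 * (4 * x 1 * y 1) by ring,
    mul_div_mul_left _ _ hσ2]

lemma setint_congr {s : Set (EuclideanSpace ℝ (Fin 2))}
    {f g : EuclideanSpace ℝ (Fin 2) → ℝ} (h : ∀ x, f x = g x) :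
    ∫ x in s, f x = ∫ x in s, g x := by
  congr 1; exact funext h

/-- Negativity of the minimum: for an admissible `ω₁` with positive Dirichlet energy,
the scaled functions `ω_σ(x) = σ³ ω₁(σ x)` are admissible and satisfy
`I₁[ω_σ] = (σ⁴/2)‖ω₁‖₂² - (σ²/2)‖∇ψ₁‖₂² < 0` for small `σ > 0`. -/
theorem min_negative (ω₁ : EuclideanSpace ℝ (Fin 2) → ℝ)
    (hωpos : ∀ x, 0 ≤ ω₁ x)
    (hω2 : MemLp ω₁ 2 (volume.restrict upperHalfPlane2))
    (hω1 : Integrable (fun x => x 1 * ω₁ x) (volume.restrict upperHalfPlane2))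
    (hmass : (∫ x in upperHalfPlane2, x 1 * ω₁ x) = 1)
    (hEpos : 0 < ∫ x in upperHalfPlane2, ∫ y in upperHalfPlane2,
      greenHalfPlane x y * ω₁ x * ω₁ y) :
    ∃ σ₀ > 0, ∀ σ : ℝ, 0 < σ → σ < σ₀ →
      ((∫ x in upperHalfPlane2, x 1 * (σ ^ 3 * ω₁ (σ • x))) = 1) ∧
      ((∫ x in upperHalfPlane2, (σ ^ 3 * ω₁ (σ • x)) ^ 2) =
        σ ^ 4 * ∫ x in upperHalfPlane2, (ω₁ x) ^ 2) ∧
      ((∫ x in upperHalfPlane2, ∫ y in upperHalfPlane2,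
          greenHalfPlane x y * (σ ^ 3 * ω₁ (σ • x)) * (σ ^ 3 * ω₁ (σ • y))) =
        σ ^ 2 * ∫ x in upperHalfPlane2, ∫ y in upperHalfPlane2,
          greenHalfPlane x y * ω₁ x * ω₁ y) ∧
      (σ ^ 4 / 2) * (∫ x in upperHalfPlane2, (ω₁ x) ^ 2) -
        (σ ^ 2 / 2) * (∫ x in upperHalfPlane2, ∫ y in upperHalfPlane2,
          greenHalfPlane x y * ω₁ x * ω₁ y) < 0 := by
  set A := ∫ x in upperHalfPlane2, (ω₁ x) ^ 2 with hAdef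
  set E := ∫ x in upperHalfPlane2, ∫ y in upperHalfPlane2,
      greenHalfPlane x y * ω₁ x * ω₁ y with hEdef
  have hA : 0 ≤ A := integral_nonneg fun x => sq_nonneg (ω₁ x)
  have hA1 : (0:ℝ) < A + 1 := by linarith
  refine ⟨Real.sqrt (E / (A + 1)), Real.sqrt_pos.2 (div_pos hEpos hA1), fun σ hσ hσ' => ?_⟩
  have hσ2 : (σ:ℝ) ^ 2 ≠ 0 := pow_ne_zero _ hσ.ne'
  refine ⟨?_, ?_, ?_, ?_⟩
  · -- mass
    have h1 : ∀ x : EuclideanSpace ℝ (Fin 2),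
        x 1 * (σ ^ 3 * ω₁ (σ • x)) = σ ^ 2 * ((fun z => z 1 * ω₁ z) (σ • x)) := by
      intro x
      simp only [PiLp.smul_apply, smul_eq_mul]
      ring
    rw [setint_congr h1, integral_const_mul, scale_int (fun z => z 1 * ω₁ z) hσ, hmass]
    field_simp
  · -- L² norm
    have h1 : ∀ x : EuclideanSpace ℝ (Fin 2),
        (σ ^ 3 * ω₁ (σ • x)) ^ 2 = σ ^ 6 * ((fun z => (ω₁ z) ^ 2) (σ • x)) := by
      intro x; ring
    rw [setint_congr h1, integral_const_mul, scale_int (fun z => (ω₁ z) ^ 2) hσ, ← hAdef]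
    field_simp
  · -- energy
    set K : EuclideanSpace ℝ (Fin 2) → ℝ :=
      fun u => ∫ y in upperHalfPlane2, greenHalfPlane u y * ω₁ y with hK
    have hinner : ∀ x : EuclideanSpace ℝ (Fin 2),
        (∫ y in upperHalfPlane2,
          greenHalfPlane x y * (σ ^ 3 * ω₁ (σ • x)) * (σ ^ 3 * ω₁ (σ • y))) =
        σ ^ 4 * ((fun u => ω₁ u * K u) (σ • x)) := by
      intro x
      have h2 : ∀ y : EuclideanSpace ℝ (Fin 2),
          greenHalfPlane x y * (σ ^ 3 * ω₁ (σ • x)) * (σ ^ 3 * ω₁ (σ • y)) =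
          (σ ^ 6 * ω₁ (σ • x)) *
            ((fun z => greenHalfPlane (σ • x) z * ω₁ z) (σ • y)) := by
        intro y
        simp only [green_smul hσ]
        ring
      rw [setint_congr h2, integral_const_mul,
        scale_int (fun z => greenHalfPlane (σ • x) z * ω₁ z) hσ]
      simp only [hK]
      field_simp
    rw [setint_congr hinner, integral_const_mul, scale_int (fun u => ω₁ u * K u) hσ]
    have h3 : ∀ x : EuclideanSpace ℝ (Fin 2),
        ω₁ x * K x = ∫ y in upperHalfPlane2, greenHalfPlane x y * ω₁ x * ω₁ y := by
      intro x
      rw [hK]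
      simp only
      rw [← integral_const_mul]
      exact setint_congr fun y => by ring
    rw [setint_congr h3, ← hEdef]
    field_simp
  · -- negativity
    have hs : σ ^ 2 < E / (A + 1) := by
      have := Real.sq_sqrt (le_of_lt (div_pos hEpos hA1))
      calc σ ^ 2 < Real.sqrt (E / (A + 1)) ^ 2 := by
            exact pow_lt_pow_left₀ hσ' hσ.le two_ne_zero
        _ = E / (A + 1) := this
    have h1 : σ ^ 2 * (A + 1) < E := (lt_div_iff₀ hA1).1 hs
    have h2 : (0:ℝ) < σ ^ 2 := by positivity
    nlinarith [mul_lt_mul_of_pos_left h1 h2, mul_nonneg h2.le hA, sq_nonneg (σ ^ 2)]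
end
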